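/- For every family F = {F_t}_{t>0} of complex numbers and every λ > 0, one has λ√(N_λ(F)) ≤ C ( S_2(F) + λ√(N_{λ/3}^d(F)) ) for an absolute constant C, where N_λ is the λ-jump function, N^d_λ is the dyadic λ-jump function restricted to times t of the form 2^j (j ∈ ℤ), and S_2(F) = (Σ_{j∈ℤ} V_{2,j}(F)²)^{1/2} is the short 2-variation, with V_{2,j}(F) the 2-variation of F over [2^j, 2^{j+1}]. -/

import Mathlib

open scoped ENNReal

/-- The `λ`-jump number of a family `F = {F_t : t > 0}`. -/
noncomputable def jumpNumber (F : ℝ → ℂ) (lam : ℝ) : ℝ≥0∞ :=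
  ⨆ (N : ℕ) (_ : ∃ s t : ℕ → ℝ, (∀ k < N, 0 < s k) ∧
      (∀ k < N, s k < t k) ∧ (∀ k, k + 1 < N → t k ≤ s (k + 1)) ∧
      (∀ k < N, lam < ‖F (t k) - F (s k)‖)), (N : ℝ≥0∞)

/-- The dyadic `λ`-jump number of `F`, with times restricted to powers `2^j`, `j ∈ ℤ`. -/
noncomputable def dyadicJumpNumber (F : ℝ → ℂ) (lam : ℝ) : ℝ≥0∞ :=
  ⨆ (N : ℕ) (_ : ∃ j k : ℕ → ℤ,
      (∀ l < N, j l < k l) ∧ (∀ l, l + 1 < N → k l ≤ j (l + 1)) ∧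
      (∀ l < N, lam < ‖F ((2 : ℝ) ^ (k l)) - F ((2 : ℝ) ^ (j l))‖)), (N : ℝ≥0∞)

/-- The `2`-variation of `F` over the dyadic block `[2^j, 2^{j+1}]`. -/
noncomputable def shortVariationBlock (F : ℝ → ℂ) (j : ℤ) : ℝ≥0∞ :=
  ⨆ (N : ℕ) (t : Fin (N + 1) → ℝ) (_ : StrictMono t)
    (_ : ∀ i, t i ∈ Set.Icc ((2 : ℝ) ^ j) ((2 : ℝ) ^ (j + 1))),
    (∑ i : Fin N, ENNReal.ofReal (‖F (t i.succ) - F (t i.castSucc)‖ ^ 2)) ^ (1 / (2 : ℝ))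

/-- The short `2`-variation `S₂(F) = (∑_{j∈ℤ} V_{2,j}(F)²)^{1/2}`. -/
noncomputable def shortVariation (F : ℝ → ℂ) : ℝ≥0∞ :=
  (∑' j : ℤ, (shortVariationBlock F j) ^ (2 : ℝ)) ^ (1 / (2 : ℝ))

/-!
Let `μ = λ/3`. A `λ`-jump of `F` over `[s, t]` with `2^a < s ≤ 2^(a+1)` and `2^b ≤ t < 2^(b+1)`
either lies inside the single block `[2^a, 2^(a+1)]`, or splits at `2^(a+1) ≤ 2^b` into three
pieces, one of which, by the triangle inequality, is a `μ`-jump. The two outer pieces lie inside a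
dyadic block and the middle one runs between powers of two. Disjoint `μ`-jumps inside one block
are consecutive increments of a partition of that block, so there are at most `V_{2,j}(F)² / μ²`
of them, while the middle pieces form a dyadic `μ`-jump sequence. Hence
`μ² N_λ(F) ≤ S₂(F)² + μ² N^d_μ(F)`, and taking square roots gives the claim with `C = 3`.
-/

open Finset Matrix

noncomputable def sumSqIncrements (F : ℝ → ℂ) {n : ℕ} (t : Fin (n + 1) → ℝ) : ℝ≥0∞ :=
  ∑ i : Fin n, ENNReal.ofReal (‖F (t i.succ) - F (t i.castSucc)‖ ^ 2)

def HasBlockJump (F : ℝ → ℂ) (μ s t : ℝ) (j : ℤ) : Prop :=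
  ∃ u v, s ≤ u ∧ v ≤ t ∧ (2 : ℝ) ^ j ≤ u ∧ v ≤ (2 : ℝ) ^ (j + 1) ∧ u < v ∧ μ < ‖F v - F u‖

def HasDyadicJump (F : ℝ → ℂ) (μ s t : ℝ) : Prop :=
  ∃ p q : ℤ, p < q ∧ s ≤ (2 : ℝ) ^ p ∧ (2 : ℝ) ^ q ≤ t ∧ μ < ‖F ((2 : ℝ) ^ q) - F ((2 : ℝ) ^ p)‖

lemma le_of_lt_of_consecutive {N : ℕ} {s t : ℕ → ℝ} (hst : ∀ k < N, s k < t k)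
    (hcons : ∀ k, k + 1 < N → t k ≤ s (k + 1)) {k l : ℕ} (hkl : k < l) (hl : l < N) :
    t k ≤ s l := by
  induction l, hkl using Nat.le_induction with
  | base => exact hcons k hl
  | succ l hkl ih =>
    exact (ih (by omega)).trans ((hst l (by omega)).le.trans (hcons l hl))

lemma mul_rpow_half_le_of_sq_mul_le {a x y z : ℝ≥0∞} (h : a ^ 2 * y ≤ x + a ^ 2 * z) :
    a * y ^ (1 / (2 : ℝ)) ≤ x ^ (1 / (2 : ℝ)) + a * z ^ (1 / (2 : ℝ)) := by
  have hsqrt : ∀ w : ℝ≥0∞, (a ^ 2 * w) ^ (1 / (2 : ℝ)) = a * w ^ (1 / (2 : ℝ)) := fun w => by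
    rw [ENNReal.mul_rpow_of_nonneg _ _ (by norm_num), one_div]
    simpa using congrArg (· * w ^ (2⁻¹ : ℝ)) (ENNReal.pow_rpow_inv_natCast two_ne_zero a)
  calc a * y ^ (1 / (2 : ℝ)) = (a ^ 2 * y) ^ (1 / (2 : ℝ)) := (hsqrt y).symm
    _ ≤ (x + a ^ 2 * z) ^ (1 / (2 : ℝ)) := ENNReal.rpow_le_rpow h (by norm_num)
    _ ≤ x ^ (1 / (2 : ℝ)) + (a ^ 2 * z) ^ (1 / (2 : ℝ)) :=
      ENNReal.rpow_add_le_add_rpow _ _ (by norm_num) (by norm_num)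
    _ = x ^ (1 / (2 : ℝ)) + a * z ^ (1 / (2 : ℝ)) := by rw [hsqrt]

section

variable {F : ℝ → ℂ} {μ : ℝ}

lemma sumSqIncrements_vecCons (x : ℝ) {n : ℕ} (t : Fin (n + 1) → ℝ) :
    sumSqIncrements F (vecCons x t) =
      ENNReal.ofReal (‖F (t 0) - F x‖ ^ 2) + sumSqIncrements F t := by
  simp [sumSqIncrements, Fin.sum_univ_succ]

lemma sumSqIncrements_le_shortVariationBlock_sq {j : ℤ} {n : ℕ} {t : Fin (n + 1) → ℝ}
    (ht : StrictMono t) (hmem : ∀ i, t i ∈ Set.Icc ((2 : ℝ) ^ j) ((2 : ℝ) ^ (j + 1))) :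
    sumSqIncrements F t ≤ shortVariationBlock F j ^ (2 : ℝ) := by
  have hroot : sumSqIncrements F t ^ (1 / (2 : ℝ)) ≤ shortVariationBlock F j :=
    le_iSup_of_le n <| le_iSup₂_of_le t ht <| le_iSup_of_le hmem le_rfl
  calc sumSqIncrements F t = (sumSqIncrements F t ^ (1 / (2 : ℝ))) ^ (2 : ℝ) := by
        rw [← ENNReal.rpow_mul]; norm_num
    _ ≤ shortVariationBlock F j ^ (2 : ℝ) := by gcongr

lemma exists_partition_start_of_le {x y d : ℝ} (hxy : x ≤ y) {n : ℕ} {t : Fin (n + 1) → ℝ}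
    (ht : StrictMono t) (ht0 : t 0 = y) (htd : ∀ i, t i ≤ d) :
    ∃ (m : ℕ) (t' : Fin (m + 1) → ℝ), StrictMono t' ∧ t' 0 = x ∧ (∀ i, t' i ≤ d) ∧
      sumSqIncrements F t ≤ sumSqIncrements F t' := by
  rcases hxy.eq_or_lt with rfl | hlt
  · exact ⟨n, t, ht, ht0, htd, le_rfl⟩
  · refine ⟨n + 1, vecCons x t, ht.vecCons (ht0 ▸ hlt), rfl, ?_, ?_⟩
    · exact Fin.cases ((hlt.trans_le (ht0 ▸ htd 0)).le) htd
    · rw [sumSqIncrements_vecCons]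
      exact le_add_self

lemma exists_partition_sum_le {ι : Type*} [LinearOrder ι] (K : Finset ι) {u v : ι → ℝ}
    (huv : ∀ k ∈ K, u k < v k) (hord : ∀ k ∈ K, ∀ l ∈ K, k < l → v k ≤ u l) {x d : ℝ}
    (hxd : x ≤ d) (hx : ∀ k ∈ K, x ≤ u k) (hd : ∀ k ∈ K, v k ≤ d) :
    ∃ (n : ℕ) (t : Fin (n + 1) → ℝ), StrictMono t ∧ t 0 = x ∧ (∀ i, t i ≤ d) ∧
      ∑ k ∈ K, ENNReal.ofReal (‖F (v k) - F (u k)‖ ^ 2) ≤ sumSqIncrements F t := by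
  classical
  induction K using Finset.induction_on_min generalizing x with
  | empty => exact ⟨0, ![x], strictMono_vecEmpty, rfl, fun i => by simpa using hxd, by simp⟩
  | insert a K hmin ih =>
    simp only [forall_mem_insert] at huv hord hx hd
    obtain ⟨n, t, ht, ht0, htd, hsum⟩ :=
      ih huv.2 (fun k hk l hl => hord.2 k hk |>.2 l hl) hd.1 (fun k hk => hord.1.2 k hk (hmin k hk))
        hd.2
    obtain ⟨m, t', ht', ht'0, ht'd, hle⟩ :=
      exists_partition_start_of_le (F := F) hx.1 (ht.vecCons (ht0 ▸ huv.1)) rfl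
        (Fin.cases (huv.1.le.trans hd.1) htd)
    refine ⟨m, t', ht', ht'0, ht'd, ?_⟩
    rw [sum_insert fun ha => lt_irrefl a (hmin a ha)]
    calc _ ≤ ENNReal.ofReal (‖F (v a) - F (u a)‖ ^ 2) + sumSqIncrements F t := by gcongr
      _ = sumSqIncrements F (vecCons (u a) t) := by rw [sumSqIncrements_vecCons, ht0]
      _ ≤ sumSqIncrements F t' := hle

lemma sum_sq_le_shortVariationBlock_sq {ι : Type*} [LinearOrder ι] (K : Finset ι) {u v : ι → ℝ}
    (huv : ∀ k ∈ K, u k < v k) (hord : ∀ k ∈ K, ∀ l ∈ K, k < l → v k ≤ u l) {j : ℤ}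
    (hblock : ∀ k ∈ K, (2 : ℝ) ^ j ≤ u k ∧ v k ≤ (2 : ℝ) ^ (j + 1)) :
    ∑ k ∈ K, ENNReal.ofReal (‖F (v k) - F (u k)‖ ^ 2) ≤ shortVariationBlock F j ^ (2 : ℝ) := by
  obtain ⟨n, t, ht, ht0, htd, hsum⟩ := exists_partition_sum_le (F := F) K huv hord
    (zpow_le_zpow_right₀ one_le_two (Int.le_add_one le_rfl)) (fun k hk => (hblock k hk).1)
    (fun k hk => (hblock k hk).2)
  refine hsum.trans (sumSqIncrements_le_shortVariationBlock_sq ht fun i => ⟨?_, htd i⟩)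
  exact ht0 ▸ ht.monotone (Fin.zero_le i)

lemma ofReal_sq_mul_card_le_tsum {ι : Type*} [LinearOrder ι] (hμ : 0 ≤ μ) (B : Finset ι)
    {s t : ι → ℝ} (hord : ∀ k ∈ B, ∀ l ∈ B, k < l → t k ≤ s l)
    (hB : ∀ k ∈ B, ∃ j, HasBlockJump F μ (s k) (t k) j) :
    ENNReal.ofReal μ ^ 2 * #B ≤ ∑' j : ℤ, shortVariationBlock F j ^ (2 : ℝ) := by
  classical
  choose! w u v hsu hvt hwu hvw huv hjump using hB
  calc ENNReal.ofReal μ ^ 2 * #B = ∑ k ∈ B, ENNReal.ofReal (μ ^ 2) := by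
        simp [ENNReal.ofReal_pow hμ, mul_comm]
    _ ≤ ∑ k ∈ B, ENNReal.ofReal (‖F (v k) - F (u k)‖ ^ 2) := by
        gcongr with k hk
        exact (hjump k hk).le
    _ = ∑ j ∈ B.image w, ∑ k ∈ B with w k = j, ENNReal.ofReal (‖F (v k) - F (u k)‖ ^ 2) :=
        (sum_fiberwise_of_maps_to (fun k hk => mem_image_of_mem w hk) _).symm
    _ ≤ ∑ j ∈ B.image w, shortVariationBlock F j ^ (2 : ℝ) := by
        refine sum_le_sum fun j _ => sum_sq_le_shortVariationBlock_sq _ ?_ ?_ ?_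
        · exact fun k hk => huv k (mem_filter.1 hk).1
        · intro k hk l hl hkl
          simp only [mem_filter] at hk hl
          exact (hvt k hk.1).trans ((hord k hk.1 l hl.1 hkl).trans (hsu l hl.1))
        · intro k hk
          obtain ⟨hkB, rfl⟩ := mem_filter.1 hk
          exact ⟨hwu k hkB, hvw k hkB⟩
    _ ≤ ∑' j : ℤ, shortVariationBlock F j ^ (2 : ℝ) := ENNReal.sum_le_tsum _

lemma natCast_le_dyadicJumpNumber {n : ℕ} (p q : Fin n → ℤ) (hpq : ∀ l, p l < q l)
    (hord : ∀ l l', l < l' → q l ≤ p l')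
    (hjump : ∀ l, μ < ‖F ((2 : ℝ) ^ q l) - F ((2 : ℝ) ^ p l)‖) :
    (n : ℝ≥0∞) ≤ dyadicJumpNumber F μ := by
  let extend (f : Fin n → ℤ) (l : ℕ) : ℤ := if h : l < n then f ⟨l, h⟩ else 0
  refine le_iSup₂_of_le n ?_ le_rfl
  refine ⟨extend p, extend q, ?_, ?_, ?_⟩
  · intro l hl
    simpa [extend, hl] using hpq ⟨l, hl⟩
  · intro l hl
    simpa [extend, hl, (Nat.lt_succ_self l).trans hl] using
      hord ⟨l, by omega⟩ ⟨l + 1, hl⟩ (Fin.mk_lt_mk.2 l.lt_succ_self)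
  · intro l hl
    simpa [extend, hl] using hjump ⟨l, hl⟩

lemma card_le_dyadicJumpNumber {ι : Type*} [LinearOrder ι] (D : Finset ι) {s t : ι → ℝ}
    (hord : ∀ k ∈ D, ∀ l ∈ D, k < l → t k ≤ s l) (hD : ∀ k ∈ D, HasDyadicJump F μ (s k) (t k)) :
    (#D : ℝ≥0∞) ≤ dyadicJumpNumber F μ := by
  choose! p q hpq hsp hqt hjump using hD
  let e := D.orderEmbOfFin rfl
  have he : ∀ l, e l ∈ D := D.orderEmbOfFin_mem rfl
  refine natCast_le_dyadicJumpNumber (p ∘ e) (q ∘ e) (fun l => hpq _ (he l)) (fun l l' hll' => ?_)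
    (fun l => hjump _ (he l))
  refine (zpow_le_zpow_iff_right₀ (one_lt_two : (1 : ℝ) < 2)).1 ?_
  exact (hqt _ (he l)).trans <| (hord _ (he l) _ (he l') (e.strictMono hll')).trans (hsp _ (he l'))

lemma lt_of_le_of_lt_norm_sub {u v : ℝ} (huv : u ≤ v) (hμ : 0 ≤ μ) (hjump : μ < ‖F v - F u‖) :
    u < v :=
  huv.lt_of_ne fun h => by simp [h] at hjump; linarith

lemma hasBlockJump_or_hasDyadicJump {s t : ℝ} (hμ : 0 ≤ μ) (hs : 0 < s) (hst : s < t)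
    (hjump : 3 * μ < ‖F t - F s‖) :
    (∃ j, HasBlockJump F μ s t j) ∨ HasDyadicJump F μ s t := by
  obtain ⟨a, ha, hsa⟩ := exists_mem_Ioc_zpow hs one_lt_two
  obtain ⟨b, hbt, htb⟩ := exists_mem_Ico_zpow (hs.trans hst) one_lt_two
  rcases le_or_gt b a with hba | hab
  · have htb' : t ≤ (2 : ℝ) ^ (a + 1) :=
      htb.le.trans (zpow_le_zpow_right₀ one_le_two (by omega))
    exact Or.inl ⟨a, s, t, le_rfl, le_rfl, ha.le, htb', hst, by linarith⟩
  set x : ℝ := 2 ^ (a + 1)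
  set y : ℝ := 2 ^ b
  have hxy : x ≤ y := zpow_le_zpow_right₀ one_le_two (by omega)
  have htri : ‖F t - F s‖ ≤ ‖F x - F s‖ + ‖F y - F x‖ + ‖F t - F y‖ := by
    have := norm_sub_le_norm_sub_add_norm_sub (F t) (F x) (F s)
    have := norm_sub_le_norm_sub_add_norm_sub (F t) (F y) (F x)
    linarith
  by_cases hleft : μ < ‖F x - F s‖
  · exact Or.inl ⟨a, s, x, le_rfl, hxy.trans hbt, ha.le, le_rfl,
      lt_of_le_of_lt_norm_sub hsa hμ hleft, hleft⟩
  by_cases hright : μ < ‖F t - F y‖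
  · exact Or.inl ⟨b, y, t, hsa.trans hxy, le_rfl, le_rfl, htb.le,
      lt_of_le_of_lt_norm_sub hbt hμ hright, hright⟩
  have hmid : μ < ‖F y - F x‖ := by linarith
  have hab' : a + 1 < b :=
    (zpow_lt_zpow_iff_right₀ (one_lt_two : (1 : ℝ) < 2)).1 (lt_of_le_of_lt_norm_sub hxy hμ hmid)
  exact Or.inr ⟨a + 1, b, hab', hsa, hbt, hmid⟩


lemma ofReal_sq_mul_natCast_le {N : ℕ} {s t : ℕ → ℝ} (hμ : 0 ≤ μ) (hs : ∀ k < N, 0 < s k)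
    (hst : ∀ k < N, s k < t k) (hcons : ∀ k, k + 1 < N → t k ≤ s (k + 1))
    (hjump : ∀ k < N, 3 * μ < ‖F (t k) - F (s k)‖) :
    ENNReal.ofReal μ ^ 2 * N ≤
      ∑' j : ℤ, shortVariationBlock F j ^ (2 : ℝ) + ENNReal.ofReal μ ^ 2 * dyadicJumpNumber F μ := by
  classical
  let B := (range N).filter fun k => ∃ j, HasBlockJump F μ (s k) (t k) j
  let D := (range N).filter fun k => ¬∃ j, HasBlockJump F μ (s k) (t k) j
  have hord : ∀ k ∈ range N, ∀ l ∈ range N, k < l → t k ≤ s l := fun k _ l hl hkl =>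
    le_of_lt_of_consecutive hst hcons hkl (mem_range.1 hl)
  have hB : ENNReal.ofReal μ ^ 2 * #B ≤ ∑' j : ℤ, shortVariationBlock F j ^ (2 : ℝ) :=
    ofReal_sq_mul_card_le_tsum hμ B
      (fun k hk l hl => hord k (filter_subset _ _ hk) l (filter_subset _ _ hl))
      (fun k hk => (mem_filter.1 hk).2)
  have hD : (#D : ℝ≥0∞) ≤ dyadicJumpNumber F μ := by
    refine card_le_dyadicJumpNumber D
      (fun k hk l hl => hord k (filter_subset _ _ hk) l (filter_subset _ _ hl)) fun k hk => ?_
    obtain ⟨hk, hnot⟩ := mem_filter.1 hk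
    have hkN := mem_range.1 hk
    exact (hasBlockJump_or_hasDyadicJump hμ (hs k hkN) (hst k hkN) (hjump k hkN)).resolve_left hnot
  calc ENNReal.ofReal μ ^ 2 * N = ENNReal.ofReal μ ^ 2 * #B + ENNReal.ofReal μ ^ 2 * #D := by
        rw [← mul_add, ← Nat.cast_add, card_filter_add_card_filter_not, card_range]
    _ ≤ _ := add_le_add hB (by gcongr)

lemma ofReal_sq_mul_jumpNumber_le (hμ : 0 ≤ μ) :
    ENNReal.ofReal μ ^ 2 * jumpNumber F (3 * μ) ≤
      ∑' j : ℤ, shortVariationBlock F j ^ (2 : ℝ) + ENNReal.ofReal μ ^ 2 * dyadicJumpNumber F μ := by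
  simp only [jumpNumber, ENNReal.mul_iSup]
  exact iSup₂_le fun N ⟨s, t, hs, hst, hcons, hjump⟩ =>
    ofReal_sq_mul_natCast_le hμ hs hst hcons hjump

end

/-- `λ √(N_λ(F)) ≤ C (S₂(F) + λ √(N^d_{λ/3}(F)))` for an absolute constant `C`. -/
theorem jump_le_short_add_dyadic :
    ∃ C : ℝ, 0 < C ∧ ∀ (F : ℝ → ℂ) (lam : ℝ), 0 < lam →
      ENNReal.ofReal lam * (jumpNumber F lam) ^ (1 / (2 : ℝ)) ≤
        ENNReal.ofReal C *
          (shortVariation F +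
            ENNReal.ofReal lam * (dyadicJumpNumber F (lam / 3)) ^ (1 / (2 : ℝ))) := by
  refine ⟨3, three_pos, fun F lam hlam => ?_⟩
  have hbound := ofReal_sq_mul_jumpNumber_le (F := F) (μ := lam / 3) (by positivity)
  rw [mul_div_cancel₀ lam three_ne_zero] at hbound
  have hlam : ENNReal.ofReal lam = ENNReal.ofReal 3 * ENNReal.ofReal (lam / 3) := by
    rw [← ENNReal.ofReal_mul zero_le_three, mul_div_cancel₀ lam three_ne_zero]
  calc ENNReal.ofReal lam * jumpNumber F lam ^ (1 / (2 : ℝ))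
      = ENNReal.ofReal 3 * (ENNReal.ofReal (lam / 3) * jumpNumber F lam ^ (1 / (2 : ℝ))) := by
        rw [hlam, mul_assoc]
    _ ≤ ENNReal.ofReal 3 * (shortVariation F +
          ENNReal.ofReal (lam / 3) * dyadicJumpNumber F (lam / 3) ^ (1 / (2 : ℝ))) := by
        gcongr
        exact mul_rpow_half_le_of_sq_mul_le hbound
    _ ≤ ENNReal.ofReal 3 * (shortVariation F +
          ENNReal.ofReal lam * dyadicJumpNumber F (lam / 3) ^ (1 / (2 : ℝ))) := by
        gcongr
        linarith
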